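/- arXiv:1602.07231 — 2 statements merged into one kernel-verified Lean document; each statement's English description precedes it below -/
import Mathlib

section
/- In the directed square lattice ℤ² (arcs between nearest neighbors in both directions), suppose a positive weight j on arcs satisfies: (i) for every vertex x and i ∈ {1,2}, j(x → x+v_i)·j(x+v_i → x) ≤ λ², and (ii) for every x, the product of the weights around the clockwise face (x → x+v₂ → x+v₁+v₂ → x+v₁ → x) lies between j(x→x+v₂)j(x+v₂→x)·j(x→x+v₁)j(x+v₁→x) and j(x+v₁→x+v₁+v₂)j(x+v₁+v₂→x+v₁)·j(x+v₂→x+v₂+v₁)j(x+v₂+v₁→x+v₂). Then for every closed walk c in ℤ², the product Φ(c) of the weights of its arcs satisfies Φ(c) ≤ λ^{ℓ(c)}, where ℓ(c) is the length of c. -/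
def Spt : List (ℤ × ℤ) := [(1,0),(0,1),(-1,0),(0,-1)]

def prodW (j : ℤ × ℤ → ℤ × ℤ → ℝ) : ℤ × ℤ → List (ℤ × ℤ) → ℝ
  | _, [] => 1
  | x, d :: t => j x (x + d) * prodW j (x + d) t

def wt (C1 C2 : ℤ) (p : ℤ × ℤ) : ℕ := (C1 - p.1).toNat + (C2 - p.2).toNat

def Wsum (C1 C2 : ℤ) (x : ℤ × ℤ) (ds : List (ℤ × ℤ)) : ℕ :=
  ∑ k ∈ Finset.range ds.length, wt C1 C2 (x + (ds.take k).sum)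

def Pat (d1 d2 : ℤ × ℤ) : Prop :=
  d2 = -d1 ∨ (d1 = (0,-1) ∧ d2 = (1,0)) ∨ (d1 = (-1,0) ∧ d2 = (0,1))

instance (d1 d2 : ℤ × ℤ) : Decidable (Pat d1 d2) := by unfold Pat; infer_instance

def InB (C1 C2 : ℤ) (p : ℤ × ℤ) : Prop := p.1 ≤ C1 ∧ p.2 ≤ C2

def BoxW (C1 C2 : ℤ) (x : ℤ × ℤ) (ds : List (ℤ × ℤ)) : Prop :=
  ∀ k : ℕ, InB C1 C2 (x + (ds.take k).sum)

lemma prodW_pos (j : ℤ × ℤ → ℤ × ℤ → ℝ) (hpos : ∀ x y, 0 < j x y) :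
    ∀ (ds : List (ℤ × ℤ)) (x : ℤ × ℤ), 0 < prodW j x ds
  | [], _ => one_pos
  | d :: t, x => mul_pos (hpos _ _) (prodW_pos j hpos t (x + d))

lemma prodW_cons (j : ℤ × ℤ → ℤ × ℤ → ℝ) (x d : ℤ × ℤ) (t : List (ℤ × ℤ)) :
    prodW j x (d :: t) = j x (x + d) * prodW j (x + d) t := rfl

lemma prodW_append (j : ℤ × ℤ → ℤ × ℤ → ℝ) :
    ∀ (p q : List (ℤ × ℤ)) (x : ℤ × ℤ),
      prodW j x (p ++ q) = prodW j x p * prodW j (x + p.sum) q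
  | [], q, x => by simp [prodW]
  | d :: t, q, x => by
      simp only [List.cons_append, prodW_cons, prodW_append j t q (x + d), List.sum_cons,
        mul_assoc, ← add_assoc]

lemma prodW_concat (j : ℤ × ℤ → ℤ × ℤ → ℝ) (ds : List (ℤ × ℤ)) (x d : ℤ × ℤ) :
    prodW j x (ds ++ [d]) = prodW j x ds * j (x + ds.sum) (x + ds.sum + d) := by
  rw [prodW_append]
  simp [prodW]

lemma Wsum_nil (C1 C2 : ℤ) (x : ℤ × ℤ) : Wsum C1 C2 x [] = 0 := by simp [Wsum]

lemma Wsum_cons (C1 C2 : ℤ) (x d : ℤ × ℤ) (t : List (ℤ × ℤ)) :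
    Wsum C1 C2 x (d :: t) = wt C1 C2 x + Wsum C1 C2 (x + d) t := by
  unfold Wsum
  rw [List.length_cons, Finset.sum_range_succ', add_comm]
  congr 1
  · simp
  · apply Finset.sum_congr rfl
    intro k _
    simp [List.take_cons, add_assoc]

lemma Wsum_append (C1 C2 : ℤ) :
    ∀ (p q : List (ℤ × ℤ)) (x : ℤ × ℤ),
      Wsum C1 C2 x (p ++ q) = Wsum C1 C2 x p + Wsum C1 C2 (x + p.sum) q
  | [], q, x => by simp [Wsum_nil]
  | d :: t, q, x => by
      simp only [List.cons_append, Wsum_cons, Wsum_append C1 C2 t q (x + d), List.sum_cons,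
        ← add_assoc]

lemma boxw_cons (C1 C2 : ℤ) (x d : ℤ × ℤ) (t : List (ℤ × ℤ)) :
    BoxW C1 C2 x (d :: t) ↔ InB C1 C2 x ∧ BoxW C1 C2 (x + d) t := by
  constructor
  · intro h
    refine ⟨by simpa using h 0, fun k => ?_⟩
    have := h (k + 1)
    simpa [List.take_cons, add_assoc] using this
  · rintro ⟨h0, h⟩ k
    cases k with
    | zero => simpa using h0
    | succ k => simpa [List.take_cons, add_assoc] using h k

lemma boxw_append (C1 C2 : ℤ) :
    ∀ (p q : List (ℤ × ℤ)) (x : ℤ × ℤ),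
      BoxW C1 C2 x (p ++ q) ↔ BoxW C1 C2 x p ∧ BoxW C1 C2 (x + p.sum) q
  | [], q, x => by
      constructor
      · intro h; exact ⟨fun k => by simpa using h 0, by simpa using h⟩
      · rintro ⟨-, h⟩; simpa using h
  | d :: t, q, x => by
      simp only [List.cons_append, boxw_cons, boxw_append C1 C2 t q (x + d), List.sum_cons,
        ← add_assoc, and_assoc]

lemma sum_mid (p s : List (ℤ × ℤ)) (a b : ℤ × ℤ) :
    (p ++ a :: b :: s).sum = p.sum + a + b + s.sum := by
  simp [List.sum_append, add_assoc]

lemma sum_coord : ∀ (ds : List (ℤ × ℤ)) (c : ℤ), (∀ d ∈ ds, d.1 + d.2 = c) →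
    ds.sum.1 + ds.sum.2 = c * ds.length
  | [], c, _ => by simp
  | d :: t, c, h => by
      have ht := sum_coord t c (fun e he => h e (List.mem_cons_of_mem d he))
      have hd := h d List.mem_cons_self
      simp only [List.sum_cons, Prod.fst_add, Prod.snd_add, List.length_cons]
      push_cast
      linarith

section Main
variable (j : ℤ × ℤ → ℤ × ℤ → ℝ) (lam : ℝ) (hlam : 0 < lam)
  (hpos : ∀ x y : ℤ × ℤ, 0 < j x y)
  (h1 : ∀ x : ℤ × ℤ, j x (x + (1,0)) * j (x + (1,0)) x ≤ lam ^ 2 ∧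
                     j x (x + (0,1)) * j (x + (0,1)) x ≤ lam ^ 2)
  (h2 : ∀ x : ℤ × ℤ,
      (j x (x + (0,1)) * j (x + (0,1)) x) * (j x (x + (1,0)) * j (x + (1,0)) x) ≤
        j x (x + (0,1)) * j (x + (0,1)) (x + (1,1)) * j (x + (1,1)) (x + (1,0)) *
          j (x + (1,0)) x ∧
      j x (x + (0,1)) * j (x + (0,1)) (x + (1,1)) * j (x + (1,1)) (x + (1,0)) *
          j (x + (1,0)) x ≤
        (j (x + (1,0)) (x + (1,1)) * j (x + (1,1)) (x + (1,0))) *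
          (j (x + (0,1)) (x + (1,1)) * j (x + (1,1)) (x + (0,1))))

include hpos h2 in
lemma sortDR (y : ℤ × ℤ) :
    j y (y + (0,-1)) * j (y + (0,-1)) (y + (0,-1) + (1,0)) ≤
      j y (y + (1,0)) * j (y + (1,0)) (y + (0,-1) + (1,0)) := by
  have h := (h2 (y + (0,-1))).1
  have e1 : y + (0,-1) + (0,1) = y := by refine Prod.ext ?_ ?_ <;> simp
  have e2 : y + (0,-1) + (1,1) = y + (1,0) := by refine Prod.ext ?_ ?_ <;> simp
  rw [e1, e2] at h
  set x0 := y + (0,-1)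
  set a := x0 + (1,0)
  have key : (j x0 y * j a x0) * (j y x0 * j x0 a) ≤
      (j x0 y * j a x0) * (j y (y+(1,0)) * j (y+(1,0)) a) := by
    calc (j x0 y * j a x0) * (j y x0 * j x0 a)
        = (j x0 y * j y x0) * (j x0 a * j a x0) := by ring
      _ ≤ j x0 y * j y (y+(1,0)) * j (y+(1,0)) a * j a x0 := h
      _ = (j x0 y * j a x0) * (j y (y+(1,0)) * j (y+(1,0)) a) := by ring
  exact le_of_mul_le_mul_left key (mul_pos (hpos _ _) (hpos _ _))

include hpos h2 in
lemma sortLU (y : ℤ × ℤ) :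
    j y (y + (-1,0)) * j (y + (-1,0)) (y + (-1,0) + (0,1)) ≤
      j y (y + (0,1)) * j (y + (0,1)) (y + (-1,0) + (0,1)) := by
  have h := (h2 (y + (-1,0))).2
  have e1 : y + (-1,0) + (1,0) = y := by refine Prod.ext ?_ ?_ <;> simp
  have e2 : y + (-1,0) + (1,1) = y + (0,1) := by refine Prod.ext ?_ ?_ <;> simp
  rw [e1, e2] at h
  set x0 := y + (-1,0)
  set a := x0 + (0,1)
  set b := y + (0,1)
  have key : (j a b * j b y) * (j y x0 * j x0 a) ≤ (j a b * j b y) * (j y b * j b a) := by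
    calc (j a b * j b y) * (j y x0 * j x0 a)
        = j x0 a * j a b * j b y * j y x0 := by ring
      _ ≤ (j y b * j b y) * (j a b * j b a) := h
      _ = (j a b * j b y) * (j y b * j b a) := by ring
  exact le_of_mul_le_mul_left key (mul_pos (hpos _ _) (hpos _ _))

include h1 in
lemma pairS (y d : ℤ × ℤ) (hd : d ∈ Spt) : j y (y + d) * j (y + d) y ≤ lam ^ 2 := by
  simp only [Spt, List.mem_cons, List.not_mem_nil, or_false] at hd
  rcases hd with h | h | h | h <;> subst h
  · exact (h1 y).1
  · exact (h1 y).2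
  · have h := (h1 (y + (-1,0))).1
    have e : y + (-1,0) + (1,0) = y := by refine Prod.ext ?_ ?_ <;> simp
    rw [e] at h
    linarith [h]
  · have h := (h1 (y + (0,-1))).2
    have e : y + (0,-1) + (0,1) = y := by refine Prod.ext ?_ ?_ <;> simp
    rw [e] at h
    linarith [h]

include hlam hpos h1 h2 in
lemma key_move (N : ℕ)
    (IH : ∀ (C1 C2 : ℤ) (x : ℤ × ℤ) (ds : List (ℤ × ℤ)), (∀ d ∈ ds, d ∈ Spt) → ds.sum = 0 →
      BoxW C1 C2 x ds → ds.length + Wsum C1 C2 x ds ≤ N → prodW j x ds ≤ lam ^ ds.length)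
    (C1 C2 : ℤ) (x : ℤ × ℤ) (p s : List (ℤ × ℤ)) (d1 d2 : ℤ × ℤ)
    (hpat : Pat d1 d2)
    (hval : ∀ d ∈ p ++ d1 :: d2 :: s, d ∈ Spt)
    (hsum : (p ++ d1 :: d2 :: s).sum = 0)
    (hbox : BoxW C1 C2 x (p ++ d1 :: d2 :: s))
    (hmeas : (p ++ d1 :: d2 :: s).length + Wsum C1 C2 x (p ++ d1 :: d2 :: s) ≤ N + 1) :
    prodW j x (p ++ d1 :: d2 :: s) ≤ lam ^ (p ++ d1 :: d2 :: s).length := by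
  set y := x + p.sum with hy
  have hPpos : 0 < prodW j x p := prodW_pos j hpos p x
  obtain ⟨hbp, hbrest⟩ := (boxw_append C1 C2 p _ x).mp hbox
  obtain ⟨hby, hbrest2⟩ := (boxw_cons C1 C2 y d1 _).mp hbrest
  obtain ⟨hby1, hbs⟩ := (boxw_cons C1 C2 (y + d1) d2 _).mp hbrest2
  have hbs0 : InB C1 C2 (y + d1 + d2) := by simpa using hbs 0
  have hps : prodW j x (p ++ d1 :: d2 :: s)
      = prodW j x p * (j y (y + d1) * (j (y + d1) (y + d1 + d2) * prodW j (y + d1 + d2) s)) := by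
    rw [prodW_append, prodW_cons, prodW_cons]
  have hws : Wsum C1 C2 x (p ++ d1 :: d2 :: s)
      = Wsum C1 C2 x p + (wt C1 C2 y + (wt C1 C2 (y + d1) + Wsum C1 C2 (y + d1 + d2) s)) := by
    rw [Wsum_append, Wsum_cons, Wsum_cons]
  have hlen : (p ++ d1 :: d2 :: s).length = p.length + s.length + 2 := by
    simp [List.length_append]; omega
  have hSpos : 0 < prodW j (y + d1 + d2) s := prodW_pos j hpos s _
  rcases hpat with hneg | ⟨e1, e2⟩ | ⟨e1, e2⟩
  · -- backtrack removal
    subst hneg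
    have hyd : y + d1 + -d1 = y := add_neg_cancel_right y d1
    rw [hyd] at hps hws hbs hbs0 hSpos
    have hval' : ∀ d ∈ p ++ s, d ∈ Spt := by
      intro d hd
      apply hval
      simp only [List.mem_append, List.mem_cons] at hd ⊢
      tauto
    have hsum' : (p ++ s).sum = 0 := by
      rw [sum_mid] at hsum
      rw [List.sum_append]
      have : p.sum + d1 + -d1 + s.sum = p.sum + s.sum := by abel
      rw [this] at hsum
      exact hsum
    have hbox' : BoxW C1 C2 x (p ++ s) := (boxw_append C1 C2 p s x).mpr ⟨hbp, hbs⟩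
    have hws' : Wsum C1 C2 x (p ++ s) = Wsum C1 C2 x p + Wsum C1 C2 y s := Wsum_append C1 C2 p s x
    have hmeas' : (p ++ s).length + Wsum C1 C2 x (p ++ s) ≤ N := by
      rw [hws'] ; rw [hws, hlen] at hmeas
      simp only [List.length_append] at hmeas ⊢
      omega
    have hI := IH C1 C2 x (p ++ s) hval' hsum' hbox' hmeas'
    rw [prodW_append] at hI
    have hd1S : d1 ∈ Spt := hval d1 (by simp)
    have hpair := pairS j lam h1 y d1 hd1S
    rw [hps, hlen]
    have hexp : lam ^ (p.length + s.length + 2) = lam ^ 2 * lam ^ (p ++ s).length := by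
      rw [← pow_add]
      congr 1
      simp [List.length_append]
      omega
    rw [hexp]
    calc prodW j x p * (j y (y + d1) * (j (y + d1) y * prodW j y s))
        = (j y (y + d1) * j (y + d1) y) * (prodW j x p * prodW j y s) := by ring
      _ ≤ lam ^ 2 * (prodW j x p * prodW j y s) := by
          apply mul_le_mul_of_nonneg_right hpair
          positivity
      _ ≤ lam ^ 2 * lam ^ (p ++ s).length := by
          apply mul_le_mul_of_nonneg_left _ (by positivity)
          rw [List.length_append]
          exact le_of_le_of_eq hI (by rw [List.length_append])
  · -- sort move D,R -> R,D
    subst e1; subst e2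
    have hcomm : y + (1,0) + (0,-1) = y + (0,-1) + (1,0) := add_right_comm y _ _
    have hby2 : InB C1 C2 (y + (1,0)) := by
      obtain ⟨ha, hb⟩ := hbs0
      obtain ⟨hc, hd⟩ := hby
      simp only [InB, Prod.fst_add, Prod.snd_add] at *
      constructor <;> omega
    have hval' : ∀ d ∈ p ++ (1,0) :: (0,-1) :: s, d ∈ Spt := by
      intro d hd
      apply hval
      simp only [List.mem_append, List.mem_cons] at hd ⊢
      tauto
    have hsum' : (p ++ (1,0) :: (0,-1) :: s).sum = 0 := by
      rw [sum_mid, add_right_comm p.sum _ _]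
      rw [sum_mid] at hsum
      exact hsum
    have hbox' : BoxW C1 C2 x (p ++ (1,0) :: (0,-1) :: s) := by
      refine (boxw_append C1 C2 p _ x).mpr ⟨hbp, ?_⟩
      refine (boxw_cons C1 C2 y _ _).mpr ⟨hby, ?_⟩
      refine (boxw_cons C1 C2 _ _ _).mpr ⟨hby2, ?_⟩
      rw [hcomm]
      exact hbs
    have hwt : wt C1 C2 (y + (1,0)) + 1 ≤ wt C1 C2 (y + (0,-1)) := by
      obtain ⟨ha, hb⟩ := hbs0
      obtain ⟨hc, hd⟩ := hby
      simp only [wt, Prod.fst_add, Prod.snd_add] at *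
      omega
    have hmeas' : (p ++ (1,0) :: (0,-1) :: s).length + Wsum C1 C2 x (p ++ (1,0) :: (0,-1) :: s) ≤ N := by
      have hws2 : Wsum C1 C2 x (p ++ (1,0) :: (0,-1) :: s)
          = Wsum C1 C2 x p + (wt C1 C2 y + (wt C1 C2 (y + (1,0)) + Wsum C1 C2 (y + (1,0) + (0,-1)) s)) := by
        rw [Wsum_append, Wsum_cons, Wsum_cons]
      rw [hws2, hcomm]
      rw [hws] at hmeas
      simp only [List.length_append, List.length_cons] at hmeas ⊢
      omega
    have hI := IH C1 C2 x (p ++ (1,0) :: (0,-1) :: s) hval' hsum' hbox' hmeas'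
    have hps' : prodW j x (p ++ (1,0) :: (0,-1) :: s)
        = prodW j x p * (j y (y + (1,0)) * (j (y + (1,0)) (y + (0,-1) + (1,0)) * prodW j (y + (0,-1) + (1,0)) s)) := by
      rw [prodW_append, prodW_cons, prodW_cons, hcomm]
    have hlen' : (p ++ (1,0) :: (0,-1) :: s).length = (p ++ (0,-1) :: (1,0) :: s).length := by
      simp
    have hsort := sortDR j hpos h2 y
    rw [hps]
    rw [hps', hlen'] at hI
    calc prodW j x p * (j y (y + (0,-1)) * (j (y + (0,-1)) (y + (0,-1) + (1,0)) * prodW j (y + (0,-1) + (1,0)) s))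
        = (j y (y + (0,-1)) * j (y + (0,-1)) (y + (0,-1) + (1,0))) * (prodW j x p * prodW j (y + (0,-1) + (1,0)) s) := by ring
      _ ≤ (j y (y + (1,0)) * j (y + (1,0)) (y + (0,-1) + (1,0))) * (prodW j x p * prodW j (y + (0,-1) + (1,0)) s) := by
          apply mul_le_mul_of_nonneg_right hsort
          positivity
      _ = prodW j x p * (j y (y + (1,0)) * (j (y + (1,0)) (y + (0,-1) + (1,0)) * prodW j (y + (0,-1) + (1,0)) s)) := by ring
      _ ≤ lam ^ (p ++ (0,-1) :: (1,0) :: s).length := hI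
  · -- sort move L,U -> U,L
    subst e1; subst e2
    have hcomm : y + (0,1) + (-1,0) = y + (-1,0) + (0,1) := add_right_comm y _ _
    have hby2 : InB C1 C2 (y + (0,1)) := by
      obtain ⟨ha, hb⟩ := hbs0
      obtain ⟨hc, hd⟩ := hby
      simp only [InB, Prod.fst_add, Prod.snd_add] at *
      constructor <;> omega
    have hval' : ∀ d ∈ p ++ (0,1) :: (-1,0) :: s, d ∈ Spt := by
      intro d hd
      apply hval
      simp only [List.mem_append, List.mem_cons] at hd ⊢
      tauto
    have hsum' : (p ++ (0,1) :: (-1,0) :: s).sum = 0 := by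
      rw [sum_mid, add_right_comm p.sum _ _]
      rw [sum_mid] at hsum
      exact hsum
    have hbox' : BoxW C1 C2 x (p ++ (0,1) :: (-1,0) :: s) := by
      refine (boxw_append C1 C2 p _ x).mpr ⟨hbp, ?_⟩
      refine (boxw_cons C1 C2 y _ _).mpr ⟨hby, ?_⟩
      refine (boxw_cons C1 C2 _ _ _).mpr ⟨hby2, ?_⟩
      rw [hcomm]
      exact hbs
    have hwt : wt C1 C2 (y + (0,1)) + 1 ≤ wt C1 C2 (y + (-1,0)) := by
      obtain ⟨ha, hb⟩ := hbs0
      obtain ⟨hc, hd⟩ := hby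
      simp only [wt, Prod.fst_add, Prod.snd_add] at *
      omega
    have hmeas' : (p ++ (0,1) :: (-1,0) :: s).length + Wsum C1 C2 x (p ++ (0,1) :: (-1,0) :: s) ≤ N := by
      have hws2 : Wsum C1 C2 x (p ++ (0,1) :: (-1,0) :: s)
          = Wsum C1 C2 x p + (wt C1 C2 y + (wt C1 C2 (y + (0,1)) + Wsum C1 C2 (y + (0,1) + (-1,0)) s)) := by
        rw [Wsum_append, Wsum_cons, Wsum_cons]
      rw [hws2, hcomm]
      rw [hws] at hmeas
      simp only [List.length_append, List.length_cons] at hmeas ⊢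
      omega
    have hI := IH C1 C2 x (p ++ (0,1) :: (-1,0) :: s) hval' hsum' hbox' hmeas'
    have hps' : prodW j x (p ++ (0,1) :: (-1,0) :: s)
        = prodW j x p * (j y (y + (0,1)) * (j (y + (0,1)) (y + (-1,0) + (0,1)) * prodW j (y + (-1,0) + (0,1)) s)) := by
      rw [prodW_append, prodW_cons, prodW_cons, hcomm]
    have hlen' : (p ++ (0,1) :: (-1,0) :: s).length = (p ++ (-1,0) :: (0,1) :: s).length := by
      simp
    have hsort := sortLU j hpos h2 y
    rw [hps]
    rw [hps', hlen'] at hI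
    calc prodW j x p * (j y (y + (-1,0)) * (j (y + (-1,0)) (y + (-1,0) + (0,1)) * prodW j (y + (-1,0) + (0,1)) s))
        = (j y (y + (-1,0)) * j (y + (-1,0)) (y + (-1,0) + (0,1))) * (prodW j x p * prodW j (y + (-1,0) + (0,1)) s) := by ring
      _ ≤ (j y (y + (0,1)) * j (y + (0,1)) (y + (-1,0) + (0,1))) * (prodW j x p * prodW j (y + (-1,0) + (0,1)) s) := by
          apply mul_le_mul_of_nonneg_right hsort
          positivity
      _ = prodW j x p * (j y (y + (0,1)) * (j (y + (0,1)) (y + (-1,0) + (0,1)) * prodW j (y + (-1,0) + (0,1)) s)) := by ring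
      _ ≤ lam ^ (p ++ (-1,0) :: (0,1) :: s).length := hI
end Main
lemma nopat (ds : List (ℤ × ℤ)) (hne : ds ≠ []) (hval : ∀ d ∈ ds, d ∈ Spt)
    (hsum : ds.sum = 0)
    (h : ∀ i (hi : i + 1 < ds.length), ¬ Pat (ds[i]'(by omega)) (ds[i+1]'hi))
    (hw : ¬ Pat (ds.getLast hne) (ds.head hne)) : False := by
  set n := ds.length with hn
  have npos : 0 < n := List.length_pos_iff.mpr hne
  have hcomb : ∀ i, i < n → ¬ Pat ds[i]! ds[(i+1) % n]! := by
    intro i hi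
    by_cases hi1 : i + 1 < n
    · rw [Nat.mod_eq_of_lt hi1, getElem!_pos ds i (by omega), getElem!_pos ds (i+1) hi1]
      exact h i hi1
    · have hieq : i + 1 = n := by omega
      have : (i + 1) % n = 0 := by rw [hieq, Nat.mod_self]
      rw [this, getElem!_pos ds i (by omega), getElem!_pos ds 0 (by omega)]
      rw [List.getLast_eq_getElem, List.head_eq_getElem] at hw
      simp only [show ds.length - 1 = i from by omega] at hw
      exact hw
  set P : ℤ × ℤ → Prop := fun d => d = (0,-1) ∨ d = (-1,0) with hP
  have step : ∀ i, i < n → P ds[i]! → P ds[(i+1)%n]! := by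
    intro i hi hp
    have hlt : (i+1) % n < n := Nat.mod_lt _ npos
    have hmem : ds[(i+1)%n]! ∈ ds := by
      rw [getElem!_pos ds _ hlt]; exact List.getElem_mem hlt
    have hv := hval _ hmem
    have hnp := hcomb i hi
    simp only [Spt, List.mem_cons, List.not_mem_nil, or_false] at hv
    rcases hp with hp | hp <;> rw [hp] at hnp <;>
      rcases hv with hv | hv | hv | hv <;> rw [hv] at hnp ⊢ <;>
      first
        | (left; rfl)
        | (right; rfl)
        | (exact absurd (by decide) hnp)
  by_cases hex : ∃ i, i < n ∧ P ds[i]!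
  · obtain ⟨i, hi, hp⟩ := hex
    have key : ∀ t, P ds[(i+t)%n]! := by
      intro t
      induction t with
      | zero => simpa [Nat.mod_eq_of_lt hi] using hp
      | succ t ih =>
          have := step ((i+t)%n) (Nat.mod_lt _ npos) ih
          rwa [Nat.mod_add_mod] at this
    have allP : ∀ d ∈ ds, d.1 + d.2 = -1 := by
      intro d hd
      obtain ⟨k, hk, ek⟩ := List.mem_iff_getElem.mp hd
      have := key (n - i + k)
      have e : (i + (n - i + k)) % n = k := by
        have h1 : i + (n - i + k) = n + k := by omega
        rw [h1, Nat.add_mod_left, Nat.mod_eq_of_lt hk]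
      rw [e, getElem!_pos ds k hk, ek] at this
      rcases this with h' | h' <;> rw [h'] <;> norm_num
    have := sum_coord ds (-1) allP
    rw [hsum] at this
    simp only [Prod.fst_zero, Prod.snd_zero] at this
    have : (n : ℤ) = 0 := by linarith
    omega
  · push_neg at hex
    have allP : ∀ d ∈ ds, d.1 + d.2 = 1 := by
      intro d hd
      obtain ⟨k, hk, ek⟩ := List.mem_iff_getElem.mp hd
      have hnp := hex k hk
      rw [getElem!_pos ds k hk, ek] at hnp
      have hv := hval d hd
      simp only [Spt, List.mem_cons, List.not_mem_nil, or_false] at hv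
      simp only [hP, not_or] at hnp
      rcases hv with hv | hv | hv | hv
      · rw [hv]; norm_num
      · rw [hv]; norm_num
      · exact absurd hv hnp.2
      · exact absurd hv hnp.1
    have := sum_coord ds 1 allP
    rw [hsum] at this
    simp only [Prod.fst_zero, Prod.snd_zero] at this
    have : (n : ℤ) = 0 := by linarith
    omega

section Main2
variable (j : ℤ × ℤ → ℤ × ℤ → ℝ) (lam : ℝ) (hlam : 0 < lam)
  (hpos : ∀ x y : ℤ × ℤ, 0 < j x y)
  (h1 : ∀ x : ℤ × ℤ, j x (x + (1,0)) * j (x + (1,0)) x ≤ lam ^ 2 ∧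
                     j x (x + (0,1)) * j (x + (0,1)) x ≤ lam ^ 2)
  (h2 : ∀ x : ℤ × ℤ,
      (j x (x + (0,1)) * j (x + (0,1)) x) * (j x (x + (1,0)) * j (x + (1,0)) x) ≤
        j x (x + (0,1)) * j (x + (0,1)) (x + (1,1)) * j (x + (1,1)) (x + (1,0)) *
          j (x + (1,0)) x ∧
      j x (x + (0,1)) * j (x + (0,1)) (x + (1,1)) * j (x + (1,1)) (x + (1,0)) *
          j (x + (1,0)) x ≤
        (j (x + (1,0)) (x + (1,1)) * j (x + (1,1)) (x + (1,0))) *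
          (j (x + (0,1)) (x + (1,1)) * j (x + (1,1)) (x + (0,1))))

include hlam hpos h1 h2 in
lemma mainW : ∀ (N : ℕ) (C1 C2 : ℤ) (x : ℤ × ℤ) (ds : List (ℤ × ℤ)),
    (∀ d ∈ ds, d ∈ Spt) → ds.sum = 0 → BoxW C1 C2 x ds →
    ds.length + Wsum C1 C2 x ds ≤ N → prodW j x ds ≤ lam ^ ds.length := by
  intro N
  induction N with
  | zero =>
      intro C1 C2 x ds _ _ _ hm
      have hds : ds = [] := by
        cases ds with
        | nil => rfl
        | cons a t => simp at hm
      subst hds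
      simp [prodW]
  | succ N IH =>
      intro C1 C2 x ds hval hsum hbox hmeas
      rcases eq_or_ne ds [] with rfl | hne
      · simp [prodW]
      by_cases hA : ∃ p d1 d2 s, ds = p ++ d1 :: d2 :: s ∧ Pat d1 d2
      · obtain ⟨p, d1, d2, s, rfl, hpat⟩ := hA
        exact key_move j lam hlam hpos h1 h2 N IH C1 C2 x p s d1 d2 hpat hval hsum hbox hmeas
      · by_cases hW : Pat (ds.getLast hne) (ds.head hne)
        · -- rotate by one
          cases ds with
          | nil => exact absurd rfl hne
          | cons d t =>
            rcases eq_or_ne t [] with rfl | htne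
            · exfalso
              have hd0 : d = 0 := by simpa using hsum
              have hmem := hval d (by simp)
              rw [hd0] at hmem
              simp [Spt, Prod.ext_iff] at hmem
            · have hdt : d + t.sum = 0 := by simpa using hsum
              have hxdt : x + d + t.sum = x := by
                rw [add_assoc, hdt, add_zero]
              have hval' : ∀ e ∈ t ++ [d], e ∈ Spt := by
                intro e he
                apply hval
                simp only [List.mem_append, List.mem_cons, List.not_mem_nil, or_false] at he ⊢
                tauto
              have hsum' : (t ++ [d]).sum = 0 := by
                rw [List.sum_append, List.sum_cons, List.sum_nil, add_zero, add_comm]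
                exact hdt
              obtain ⟨hbx, hbt⟩ := (boxw_cons C1 C2 x d t).mp hbox
              have hbox' : BoxW C1 C2 (x + d) (t ++ [d]) := by
                refine (boxw_append C1 C2 t [d] (x + d)).mpr ⟨hbt, ?_⟩
                rw [hxdt]
                intro k
                cases k with
                | zero => simpa using hbx
                | succ k =>
                    have : ([d].take (k+1)) = [d] := by simp
                    rw [this]
                    simpa using hbt 0
              have hwsum' : Wsum C1 C2 (x + d) (t ++ [d]) = Wsum C1 C2 x (d :: t) := by
                rw [Wsum_append, Wsum_cons, Wsum_nil, hxdt, Wsum_cons C1 C2 x d t]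
                omega
              have hmeas' : (t ++ [d]).length + Wsum C1 C2 (x + d) (t ++ [d]) ≤ N + 1 := by
                rw [hwsum']
                simpa using hmeas
              have hprod : prodW j x (d :: t) = prodW j (x + d) (t ++ [d]) := by
                rw [prodW_concat, hxdt, prodW_cons, mul_comm]
              -- decomposition of rotated list
              have hdec : t ++ [d] = t.dropLast ++ t.getLast htne :: d :: ([] : List (ℤ × ℤ)) := by
                conv_lhs => rw [← List.dropLast_append_getLast htne]
                simp
              have hpat' : Pat (t.getLast htne) d := by
                have e1 : (d :: t).getLast hne = t.getLast htne := List.getLast_cons htne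
                have e2 : (d :: t).head hne = d := rfl
                rw [e1, e2] at hW
                exact hW
              rw [hdec] at hval' hsum' hbox' hmeas'
              have hk := key_move j lam hlam hpos h1 h2 N IH C1 C2 (x + d) t.dropLast []
                (t.getLast htne) d hpat' hval' hsum' hbox' hmeas'
              rw [← hdec] at hk
              rw [hprod]
              refine le_of_le_of_eq hk ?_
              congr 1
              simp
        · exfalso
          refine nopat ds hne hval hsum ?_ hW
          intro i hi hpat
          refine hA ⟨ds.take i, ds[i], ds[i+1], ds.drop (i+2), ?_, hpat⟩
          conv_lhs => rw [← List.take_append_drop i ds]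
          congr 1
          rw [List.drop_eq_getElem_cons (by omega), List.drop_eq_getElem_cons hi]
end Main2

lemma prodW_eq_prod (j : ℤ × ℤ → ℤ × ℤ → ℝ) :
    ∀ (l : List (ℤ × ℤ)) (x : ℤ × ℤ),
      prodW j x l = ∏ k ∈ Finset.range l.length,
        j (x + (l.take k).sum) (x + (l.take (k+1)).sum)
  | [], x => by simp [prodW]
  | d :: t, x => by
      rw [prodW_cons, prodW_eq_prod j t (x + d), List.length_cons, Finset.prod_range_succ',
        mul_comm]
      congr 1
      · apply Finset.prod_congr rfl
        intro k _
        simp [List.take_cons, add_assoc]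
      · simp

theorem stmt_15 (j : ℤ × ℤ → ℤ × ℤ → ℝ) (lam : ℝ) (hlam : 0 < lam)
    (hpos : ∀ x y : ℤ × ℤ, 0 < j x y)
    (h1 : ∀ x : ℤ × ℤ, j x (x + (1,0)) * j (x + (1,0)) x ≤ lam ^ 2 ∧
                       j x (x + (0,1)) * j (x + (0,1)) x ≤ lam ^ 2)
    (h2 : ∀ x : ℤ × ℤ,
      (j x (x + (0,1)) * j (x + (0,1)) x) * (j x (x + (1,0)) * j (x + (1,0)) x) ≤
        j x (x + (0,1)) * j (x + (0,1)) (x + (1,1)) * j (x + (1,1)) (x + (1,0)) *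
          j (x + (1,0)) x ∧
      j x (x + (0,1)) * j (x + (0,1)) (x + (1,1)) * j (x + (1,1)) (x + (1,0)) *
          j (x + (1,0)) x ≤
        (j (x + (1,0)) (x + (1,1)) * j (x + (1,1)) (x + (1,0))) *
          (j (x + (0,1)) (x + (1,1)) * j (x + (1,1)) (x + (0,1))))
    (n : ℕ) (w : Fin (n+1) → ℤ × ℤ)
    (hclosed : w (Fin.last n) = w 0)
    (hadj : ∀ i : Fin n,
      w i.succ = w i.castSucc + (1,0) ∨ w i.succ = w i.castSucc + (0,1) ∨
      w i.castSucc = w i.succ + (1,0) ∨ w i.castSucc = w i.succ + (0,1)) :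
    ∏ i : Fin n, j (w i.castSucc) (w i.succ) ≤ lam ^ n := by
  classical
  set ds : List (ℤ × ℤ) := List.ofFn (fun i : Fin n => w i.succ - w i.castSucc) with hds
  set W : ℕ → ℤ × ℤ := fun k => w ⟨min k n, by omega⟩ with hW
  have hlen : ds.length = n := by simp [hds]
  have hget : ∀ (k : ℕ) (hk : k < n), ds[k]'(by rw [hlen]; exact hk) = W (k+1) - W k := by
    intro k hk
    simp only [hds, List.getElem_ofFn]
    congr 1
    · congr 1
      apply Fin.ext
      simp [hW]
      try omega
    · congr 1
      apply Fin.ext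
      simp [hW]
      try omega
  have htake : ∀ k : ℕ, (ds.take k).sum = W k - W 0 := by
    intro k
    induction k with
    | zero => simp
    | succ k ih =>
        by_cases hk : k < n
        · rw [List.sum_take_succ ds k (by rw [hlen]; exact hk), ih, hget k hk]
          abel
        · have e1 : ds.take (k+1) = ds := List.take_of_length_le (by rw [hlen]; omega)
          have e2 : ds.take k = ds := List.take_of_length_le (by rw [hlen]; omega)
          rw [e1, ← e2, ih]
          have : W (k+1) = W k := by
            simp only [hW]
            congr 1
            apply Fin.ext
            simp
            try omega
          rw [this]
  have hW0 : W 0 = w 0 := by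
    simp only [hW]
    congr 1
  have hWn : W n = w 0 := by
    rw [← hclosed]
    simp only [hW]
    congr 1
    apply Fin.ext
    simp [Fin.last]
  have hsum0 : ds.sum = 0 := by
    have e : ds.take n = ds := List.take_of_length_le (le_of_eq hlen)
    rw [← e, htake n, hWn, hW0, sub_self]
  have hvalS : ∀ d ∈ ds, d ∈ Spt := by
    intro d hd
    rw [hds, List.mem_ofFn] at hd
    obtain ⟨i, rfl⟩ := hd
    show w i.succ - w i.castSucc ∈ Spt
    rcases hadj i with h | h | h | h <;> rw [h]
    · simp [Spt]
    · simp [Spt]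
    · have e : w i.succ - (w i.succ + ((1:ℤ),(0:ℤ))) = ((-1,0) : ℤ × ℤ) := by
        rw [sub_add_cancel_left]
        refine Prod.ext ?_ ?_ <;> simp
      rw [e]
      simp [Spt]
    · have e : w i.succ - (w i.succ + ((0:ℤ),(1:ℤ))) = ((0,-1) : ℤ × ℤ) := by
        rw [sub_add_cancel_left]
        refine Prod.ext ?_ ?_ <;> simp
      rw [e]
      simp [Spt]
  -- box bounds
  have hne : (Finset.univ : Finset (Fin (n+1))).Nonempty := Finset.univ_nonempty
  set C1 : ℤ := Finset.univ.sup' hne (fun i : Fin (n+1) => (w i).1) with hC1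
  set C2 : ℤ := Finset.univ.sup' hne (fun i : Fin (n+1) => (w i).2) with hC2
  have hb : ∀ i : Fin (n+1), InB C1 C2 (w i) := fun i =>
    ⟨Finset.le_sup' (fun i : Fin (n+1) => (w i).1) (Finset.mem_univ i),
     Finset.le_sup' (fun i : Fin (n+1) => (w i).2) (Finset.mem_univ i)⟩
  have hbox : BoxW C1 C2 (w 0) ds := by
    intro k
    rw [htake k, hW0]
    have e : w 0 + (W k - w 0) = W k := by abel
    rw [e]
    simp only [hW]
    exact hb _
  have hprod : prodW j (w 0) ds = ∏ i : Fin n, j (w i.castSucc) (w i.succ) := by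
    rw [prodW_eq_prod, hlen]
    have step1 : ∀ k ∈ Finset.range n,
        j (w 0 + (ds.take k).sum) (w 0 + (ds.take (k+1)).sum) = j (W k) (W (k+1)) := by
      intro k _
      rw [htake k, htake (k+1), hW0]
      congr 1 <;> abel
    rw [Finset.prod_congr rfl step1]
    rw [← Fin.prod_univ_eq_prod_range (fun k => j (W k) (W (k+1))) n]
    apply Finset.prod_congr rfl
    intro i _
    congr 1
    · simp only [hW]
      congr 1
      apply Fin.ext
      simp
      try omega
    · simp only [hW]
      congr 1
      apply Fin.ext
      simp
      try omega
  have hmain := mainW j lam hlam hpos h1 h2 (ds.length + Wsum C1 C2 (w 0) ds) C1 C2 (w 0) ds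
    hvalS hsum0 hbox le_rfl
  rw [hlen, hprod] at hmain
  exact hmain
end

section
/- A probability measure μ on ℕ is the Poisson distribution with parameter λ > 0 if and only if λ·E_μ(f(n+1)) = E_μ(n·f(n)) for every bounded nonnegative function f : ℕ → ℝ. -/
theorem stmt_17 (lam : ℝ) (hlam : 0 < lam) (μ : ℕ → ℝ) (hnn : ∀ n, 0 ≤ μ n)
    (hsum : ∑' n, μ n = 1) :
    (∀ n, μ n = Real.exp (-lam) * lam ^ n / (Nat.factorial n : ℝ)) ↔
    (∀ f : ℕ → ℝ, (∀ n, 0 ≤ f n) → (∃ C : ℝ, ∀ n, f n ≤ C) →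
      lam * ∑' n : ℕ, f (n+1) * μ n = ∑' n : ℕ, (n : ℝ) * f n * μ n) := by
  constructor
  · intro hμ f hf ⟨C, hC⟩
    -- key termwise identity: lam * μ n = (n+1) * μ (n+1)
    have hkey : ∀ n : ℕ, lam * μ n = ((n : ℝ) + 1) * μ (n + 1) := by
      intro n
      rw [hμ n, hμ (n + 1)]
      have hfac : ((Nat.factorial (n + 1) : ℕ) : ℝ) =
          ((n : ℝ) + 1) * (Nat.factorial n : ℝ) := by
        rw [Nat.factorial_succ]; push_cast; ring
      have h1 : (Nat.factorial n : ℝ) ≠ 0 := by positivity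
      have h2 : ((n : ℝ) + 1) ≠ 0 := by positivity
      rw [hfac]
      field_simp
      ring
    -- summability of n * f n * μ n
    have hsummu : Summable (fun n : ℕ => (n : ℝ) * μ n) := by
      rw [← summable_nat_add_iff 1]
      have : (fun n : ℕ => ((n + 1 : ℕ) : ℝ) * μ (n + 1)) = fun n : ℕ => lam * μ n := by
        funext n
        rw [hkey n]; push_cast; ring
      rw [this]
      apply Summable.mul_left
      apply ((Real.summable_pow_div_factorial lam).mul_left (Real.exp (-lam))).congr
      intro n
      rw [hμ n]; ring
    have hsg : Summable (fun n : ℕ => (n : ℝ) * f n * μ n) := by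
      have hb : ∀ n : ℕ, (n : ℝ) * f n * μ n ≤ C * ((n : ℝ) * μ n) := by
        intro n
        have : (n : ℝ) * f n * μ n = f n * ((n : ℝ) * μ n) := by ring
        rw [this]
        exact mul_le_mul_of_nonneg_right (hC n) (mul_nonneg (Nat.cast_nonneg n) (hnn n))
      exact Summable.of_nonneg_of_le (fun n => mul_nonneg (mul_nonneg (Nat.cast_nonneg n) (hf n)) (hnn n)) hb (hsummu.mul_left C)
    rw [Summable.tsum_eq_zero_add hsg]
    simp only [Nat.cast_zero, zero_mul, zero_add]
    rw [← tsum_mul_left]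
    congr 1
    funext n
    push_cast
    rw [show lam * (f (n + 1) * μ n) = f (n + 1) * (lam * μ n) by ring, hkey n]
    ring
  · intro h
    -- derive recurrence lam * μ k = (k+1) * μ (k+1)
    have hrec : ∀ k : ℕ, lam * μ k = ((k : ℝ) + 1) * μ (k + 1) := by
      intro k
      have := h (fun n => if n = k + 1 then 1 else 0)
        (fun n => by split <;> norm_num)
        ⟨1, fun n => by split <;> norm_num⟩
      have hl : (∑' n : ℕ, (if n + 1 = k + 1 then (1 : ℝ) else 0) * μ n) = μ k := by
        rw [tsum_eq_single k]
        · simp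
        · intro b hb
          simp [Nat.succ_inj, hb]
      have hr : (∑' n : ℕ, (n : ℝ) * (if n = k + 1 then (1 : ℝ) else 0) * μ n)
          = ((k : ℝ) + 1) * μ (k + 1) := by
        rw [tsum_eq_single (k + 1)]
        · push_cast; simp
        · intro b hb
          simp [hb]
      rw [hl, hr] at this
      exact this
    -- closed form
    have hform : ∀ n, μ n = μ 0 * lam ^ n / (Nat.factorial n : ℝ) := by
      intro n
      induction n with
      | zero => simp
      | succ n ih =>
        have h2 : ((n : ℝ) + 1) ≠ 0 := by positivity
        have := hrec n
        rw [ih] at this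
        have hfac : ((Nat.factorial (n + 1) : ℕ) : ℝ) =
            ((n : ℝ) + 1) * (Nat.factorial n : ℝ) := by
          rw [Nat.factorial_succ]; push_cast; ring
        have h1 : (Nat.factorial n : ℝ) ≠ 0 := by positivity
        field_simp [hfac] at this ⊢
        linear_combination -this + μ (n + 1) * hfac
    have hexp : (∑' n : ℕ, lam ^ n / (Nat.factorial n : ℝ)) = Real.exp lam := by
      rw [Real.exp_eq_exp_ℝ, NormedSpace.exp_eq_tsum_div]
    have h0 : μ 0 * Real.exp lam = 1 := by
      calc μ 0 * Real.exp lam = μ 0 * ∑' n : ℕ, lam ^ n / (Nat.factorial n : ℝ) := by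
            rw [hexp]
        _ = ∑' n : ℕ, μ 0 * (lam ^ n / (Nat.factorial n : ℝ)) := by rw [tsum_mul_left]
        _ = ∑' n : ℕ, μ n := by
            congr 1; funext n; rw [hform n]; ring
        _ = 1 := hsum
    have hμ0 : μ 0 = Real.exp (-lam) := by
      rw [Real.exp_neg]
      field_simp at h0 ⊢
      linarith [h0]
    intro n
    rw [hform n, hμ0]
end
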